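/- Under the EM setup, if y_{n+1} maximizes Q(· | y_n) (in particular Q(y_{n+1} | y_n) ≥ Q(y_n | y_n)), then ML(y_{n+1}) ≥ ML(y_n). -/

import Mathlib

/-! With `w_{jk}(y) = π_{jk} p_{jk}(y)`, the responsibilities `Â_{jk}(yₙ)` are the weights
`w_{jk}(yₙ) / ∑_k w_{jk}(yₙ)`, so `Q(y|yₙ) - Q(yₙ|yₙ) = ∑_j ∑_k Â_{jk}(yₙ) log (w_{jk}(y) / w_{jk}(yₙ))`.
By Jensen's inequality for the concave `log`, the inner sum is at most
`log (∑_k w_{jk}(y) / ∑_k w_{jk}(yₙ))`, and these logarithms add up to `ML(y) - ML(yₙ)`. -/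

open Finset

open Real in
theorem sum_div_sum_mul_log_sub_le {ι : Type*} {s : Finset ι} {w v : ι → ℝ}
    (hw : ∀ i ∈ s, 0 < w i) (hv : ∀ i ∈ s, 0 < v i) :
    ∑ i ∈ s, w i / (∑ j ∈ s, w j) * (log (v i) - log (w i)) ≤
      log (∑ i ∈ s, v i) - log (∑ i ∈ s, w i) := by
  rcases s.eq_empty_or_nonempty with rfl | hs
  · simp
  have hW : 0 < ∑ j ∈ s, w j := sum_pos hw hs
  have hV : 0 < ∑ j ∈ s, v j := sum_pos hv hs
  have jensen := strictConcaveOn_log_Ioi.concaveOn.le_map_sum (t := s)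
    (w := fun i => w i / ∑ j ∈ s, w j) (p := fun i => v i / w i)
    (fun i hi => (div_pos (hw i hi) hW).le)
    (by rw [← sum_div, div_self hW.ne'])
    (fun i hi => Set.mem_Ioi.mpr (div_pos (hv i hi) (hw i hi)))
  have hmean : ∑ i ∈ s, w i / (∑ j ∈ s, w j) * (v i / w i) =
      (∑ i ∈ s, v i) / ∑ j ∈ s, w j := by
    rw [sum_div]
    exact sum_congr rfl fun i hi => by field_simp [(hw i hi).ne']
  simp only [smul_eq_mul, hmean] at jensen
  rw [← log_div hV.ne' hW.ne']
  refine le_of_eq_of_le (sum_congr rfl fun i hi => ?_) jensen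
  rw [log_div (hv i hi).ne' (hw i hi).ne']

theorem em_step_increases_likelihood_general {J K Y : Type*} [Fintype J]
    (N : J → Finset K)
    (π : J → K → ℝ) (hπ : ∀ j, ∀ k ∈ N j, 0 < π j k)
    (p : J → K → Y → ℝ) (hp : ∀ j, ∀ k ∈ N j, ∀ y, 0 < p j k y)
    (ML : Y → ℝ) (hML : ∀ y, ML y = ∑ j, Real.log (∑ k ∈ N j, π j k * p j k y))
    (Ahat : Y → J → K → ℝ)
    (hA : ∀ y' j, ∀ k ∈ N j,
      Ahat y' j k = π j k * p j k y' / ∑ k' ∈ N j, π j k' * p j k' y')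
    (Q : Y → Y → ℝ)
    (hQ : ∀ y y', Q y y' =
      ∑ j, ∑ k ∈ N j, Ahat y' j k * Real.log (π j k * p j k y))
    (yn ynext : Y) (hmax : Q ynext yn ≥ Q yn yn) :
    ML ynext ≥ ML yn := by
  have hweight : ∀ j, ∀ k ∈ N j, ∀ y, 0 < π j k * p j k y :=
    fun j k hk y => mul_pos (hπ j k hk) (hp j k hk y)
  have hgain : Q ynext yn - Q yn yn ≤ ML ynext - ML yn := by
    simp only [hQ, hML, ← sum_sub_distrib]
    refine sum_le_sum fun j _ => ?_
    calc ∑ k ∈ N j, (Ahat yn j k * Real.log (π j k * p j k ynext) -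
            Ahat yn j k * Real.log (π j k * p j k yn))
        = ∑ k ∈ N j, π j k * p j k yn / (∑ k' ∈ N j, π j k' * p j k' yn) *
            (Real.log (π j k * p j k ynext) - Real.log (π j k * p j k yn)) :=
          sum_congr rfl fun k hk => by rw [hA yn j k hk]; ring
      _ ≤ _ := sum_div_sum_mul_log_sub_le (fun k hk => hweight j k hk yn)
          (fun k hk => hweight j k hk ynext)
  linarith

theorem em_step_increases_likelihood {J K Y : Type*} [Fintype J]
    (N : J → Finset K) (hN : ∀ j, (N j).Nonempty)
    (π : J → K → ℝ) (hπ : ∀ j, ∀ k ∈ N j, 0 < π j k)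
    (p : J → K → Y → ℝ) (hp : ∀ j, ∀ k ∈ N j, ∀ y, 0 < p j k y)
    (ML : Y → ℝ) (hML : ∀ y, ML y = ∑ j, Real.log (∑ k ∈ N j, π j k * p j k y))
    (Ahat : Y → J → K → ℝ)
    (hA : ∀ y' j, ∀ k ∈ N j,
      Ahat y' j k = π j k * p j k y' / ∑ k' ∈ N j, π j k' * p j k' y')
    (Q : Y → Y → ℝ)
    (hQ : ∀ y y', Q y y' =
      ∑ j, ∑ k ∈ N j, Ahat y' j k * Real.log (π j k * p j k y))
    (yn ynext : Y) (hmax : Q ynext yn ≥ Q yn yn) :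
    ML ynext ≥ ML yn :=
  em_step_increases_likelihood_general N π hπ p hp ML hML Ahat hA Q hQ yn ynext hmax
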